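/- Two unbiased qubit effects A = (1/2)(1 + a·σ) and B = (1/2)(1 + b·σ) with ‖a‖, ‖b‖ ≤ 1 are coexistent if and only if ‖a + b‖ + ‖a − b‖ ≤ 2. -/

import Mathlib

open scoped ComplexOrder RealInnerProductSpace

/-- The vector of Pauli matrices contracted with a real 3-vector: `v · σ`. -/
noncomputable def pauli (v : EuclideanSpace ℝ (Fin 3)) : Matrix (Fin 2) (Fin 2) ℂ :=
  (v 0 : ℂ) • !![0, 1; 1, 0] + (v 1 : ℂ) • !![0, -Complex.I; Complex.I, 0] +
    (v 2 : ℂ) • !![1, 0; 0, -1]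

/-- The qubit effect `(1/2)(α·1 + v·σ)`. -/
noncomputable def qubitEffect (α : ℝ) (v : EuclideanSpace ℝ (Fin 3)) :
    Matrix (Fin 2) (Fin 2) ℂ :=
  (1 / 2 : ℂ) • ((α : ℂ) • (1 : Matrix (Fin 2) (Fin 2) ℂ) + pauli v)

/-- Effects `A` and `B` are coexistent: there is a four-outcome POVM `(G₁,G₂,G₃,G₄)`
with `A = G₁ + G₂` and `B = G₁ + G₃`. -/
def Coexistent (A B : Matrix (Fin 2) (Fin 2) ℂ) : Prop :=
  ∃ G₁ G₂ G₃ G₄ : Matrix (Fin 2) (Fin 2) ℂ,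
    G₁.PosSemidef ∧ G₂.PosSemidef ∧ G₃.PosSemidef ∧ G₄.PosSemidef ∧
    G₁ + G₂ + G₃ + G₄ = 1 ∧ A = G₁ + G₂ ∧ B = G₁ + G₃

/-! A Hermitian `2 × 2` matrix is positive semidefinite iff its trace and determinant are
nonnegative; for `qubitEffect γ g` these are `γ` and `(γ² - ‖g‖²) / 4`, so it is positive
semidefinite iff `‖g‖ ≤ γ`. Writing the joint POVM element `G₁` as `qubitEffect γ g`, the marginal
conditions force `G₂, G₃, G₄`, which turns coexistence into four norm inequalities on `(γ, g)`.
The triangle inequality turns these into `‖a + b‖ + ‖a - b‖ ≤ 2`; conversely the midpoint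
`g = (a + b) / 2` with `γ = ‖a + b‖ / 2` satisfies them. -/

open Matrix

namespace Matrix.IsHermitian

variable {𝕜 : Type*} [RCLike 𝕜] {A : Matrix (Fin 2) (Fin 2) 𝕜}

theorem posSemidef_iff_trace_nonneg_and_det_nonneg (hA : A.IsHermitian) :
    A.PosSemidef ↔ 0 ≤ A.trace ∧ 0 ≤ A.det := by
  refine ⟨fun h ↦ ⟨h.trace_nonneg, h.det_nonneg⟩, fun ⟨htr, hdet⟩ ↦ ?_⟩
  rw [hA.trace_eq_sum_eigenvalues, Fin.sum_univ_two, ← RCLike.ofReal_add,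
    RCLike.ofReal_nonneg] at htr
  rw [hA.det_eq_prod_eigenvalues, Fin.prod_univ_two, ← RCLike.ofReal_mul,
    RCLike.ofReal_nonneg] at hdet
  simp only [hA.posSemidef_iff_eigenvalues_nonneg, Pi.le_def, Fin.forall_fin_two, Pi.zero_apply]
  constructor <;> nlinarith

end Matrix.IsHermitian

theorem qubitEffect_eq_of (α : ℝ) (v : EuclideanSpace ℝ (Fin 3)) :
    qubitEffect α v = (1 / 2 : ℂ) •
      !![(α : ℂ) + v 2, (v 0 : ℂ) - v 1 * Complex.I;
        (v 0 : ℂ) + v 1 * Complex.I, (α : ℂ) - v 2] := by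
  ext i j
  fin_cases i <;> fin_cases j <;> simp [qubitEffect, pauli] <;> ring

theorem pauli_add (v w : EuclideanSpace ℝ (Fin 3)) : pauli (v + w) = pauli v + pauli w := by
  simp only [pauli, PiLp.add_apply, Complex.ofReal_add, add_smul]
  abel

theorem pauli_sub (v w : EuclideanSpace ℝ (Fin 3)) : pauli (v - w) = pauli v - pauli w := by
  simp only [pauli, PiLp.sub_apply, Complex.ofReal_sub, sub_smul]
  abel

theorem qubitEffect_add (α β : ℝ) (v w : EuclideanSpace ℝ (Fin 3)) :
    qubitEffect α v + qubitEffect β w = qubitEffect (α + β) (v + w) := by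
  simp only [qubitEffect, pauli_add, Complex.ofReal_add]
  module

theorem qubitEffect_sub (α β : ℝ) (v w : EuclideanSpace ℝ (Fin 3)) :
    qubitEffect α v - qubitEffect β w = qubitEffect (α - β) (v - w) := by
  simp only [qubitEffect, pauli_sub, Complex.ofReal_sub]
  module

theorem qubitEffect_two_zero : qubitEffect 2 0 = 1 := by
  ext i j
  fin_cases i <;> fin_cases j <;> simp [qubitEffect_eq_of]

theorem isHermitian_qubitEffect (α : ℝ) (v : EuclideanSpace ℝ (Fin 3)) :
    (qubitEffect α v).IsHermitian := by
  ext i j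
  fin_cases i <;> fin_cases j <;> simp [qubitEffect_eq_of, Complex.ext_iff]

theorem trace_qubitEffect (α : ℝ) (v : EuclideanSpace ℝ (Fin 3)) :
    (qubitEffect α v).trace = α := by
  simp only [qubitEffect_eq_of, smul_of, smul_cons, smul_eq_mul, smul_empty, trace_fin_two,
    of_apply, cons_val', cons_val_zero, cons_val_one, cons_val_fin_one]
  ring

theorem det_qubitEffect (α : ℝ) (v : EuclideanSpace ℝ (Fin 3)) :
    (qubitEffect α v).det = ((α ^ 2 - ‖v‖ ^ 2) / 4 : ℝ) := by
  have hv : ‖v‖ ^ 2 = v 0 ^ 2 + v 1 ^ 2 + v 2 ^ 2 := by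
    simp [EuclideanSpace.norm_sq_eq, Fin.sum_univ_three]
  rw [qubitEffect_eq_of, det_smul, det_fin_two_of, Fintype.card_fin, hv]
  push_cast
  linear_combination ((v 1 : ℂ) ^ 2 / 4) * Complex.I_sq

theorem posSemidef_qubitEffect_iff (α : ℝ) (v : EuclideanSpace ℝ (Fin 3)) :
    (qubitEffect α v).PosSemidef ↔ ‖v‖ ≤ α := by
  rw [(isHermitian_qubitEffect α v).posSemidef_iff_trace_nonneg_and_det_nonneg,
    trace_qubitEffect, det_qubitEffect, Complex.zero_le_real, Complex.zero_le_real]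
  constructor
  · rintro ⟨hα, hdet⟩
    exact (pow_le_pow_iff_left₀ (norm_nonneg v) hα two_ne_zero).1 (by linarith)
  · intro hvα
    have hv := norm_nonneg v
    constructor <;> nlinarith

theorem Matrix.IsHermitian.exists_eq_qubitEffect {A : Matrix (Fin 2) (Fin 2) ℂ}
    (hA : A.IsHermitian) : ∃ (α : ℝ) (v : EuclideanSpace ℝ (Fin 3)), A = qubitEffect α v := by
  refine ⟨(A 0 0).re + (A 1 1).re,
    !₂[2 * (A 0 1).re, -2 * (A 0 1).im, (A 0 0).re - (A 1 1).re], ?_⟩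
  have h00 := hA.apply 0 0
  have h11 := hA.apply 1 1
  have h10 := hA.apply 1 0
  simp only [Complex.ext_iff, Complex.star_def, Complex.conj_re, Complex.conj_im] at h00 h11 h10
  ext i j
  fin_cases i <;> fin_cases j <;> simp [qubitEffect_eq_of, Complex.ext_iff] <;>
    constructor <;> linarith

theorem coexistent_qubitEffect_iff (α β : ℝ) (a b : EuclideanSpace ℝ (Fin 3)) :
    Coexistent (qubitEffect α a) (qubitEffect β b) ↔
      ∃ (γ : ℝ) (g : EuclideanSpace ℝ (Fin 3)), ‖g‖ ≤ γ ∧ ‖a - g‖ ≤ α - γ ∧ ‖b - g‖ ≤ β - γ ∧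
        ‖a + b - g‖ ≤ 2 - α - β + γ := by
  constructor
  · rintro ⟨G₁, G₂, G₃, G₄, h₁, h₂, h₃, h₄, hsum, hA, hB⟩
    obtain ⟨γ, g, rfl⟩ := h₁.isHermitian.exists_eq_qubitEffect
    have hG₂ : G₂ = qubitEffect (α - γ) (a - g) := by
      rw [← qubitEffect_sub, hA, add_sub_cancel_left]
    have hG₃ : G₃ = qubitEffect (β - γ) (b - g) := by
      rw [← qubitEffect_sub, hB, add_sub_cancel_left]
    have hG₄ : G₄ = qubitEffect (2 - α - β + γ) (g - (a + b)) := by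
      rw [eq_sub_of_add_eq' hsum, hG₂, hG₃, ← qubitEffect_two_zero, qubitEffect_add,
        qubitEffect_add, qubitEffect_sub]
      congr 1
      · ring
      · abel
    subst hG₂ hG₃ hG₄
    simp only [posSemidef_qubitEffect_iff, norm_sub_rev g] at h₁ h₂ h₃ h₄
    exact ⟨γ, g, h₁, h₂, h₃, h₄⟩
  · rintro ⟨γ, g, hg, hag, hbg, habg⟩
    refine ⟨qubitEffect γ g, qubitEffect (α - γ) (a - g), qubitEffect (β - γ) (b - g),
      qubitEffect (2 - α - β + γ) (g - (a + b)), ?_, ?_, ?_, ?_, ?_, ?_, ?_⟩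
    · exact (posSemidef_qubitEffect_iff _ _).2 hg
    · exact (posSemidef_qubitEffect_iff _ _).2 hag
    · exact (posSemidef_qubitEffect_iff _ _).2 hbg
    · exact (posSemidef_qubitEffect_iff _ _).2 (by rwa [norm_sub_rev])
    · rw [qubitEffect_add, qubitEffect_add, qubitEffect_add, ← qubitEffect_two_zero]
      congr 1
      · ring
      · abel
    · rw [qubitEffect_add, add_sub_cancel, add_sub_cancel]
    · rw [qubitEffect_add, add_sub_cancel, add_sub_cancel]

theorem exists_coexistence_witness_iff {E : Type*} [SeminormedAddCommGroup E] [NormedSpace ℝ E]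
    (a b : E) :
    (∃ (γ : ℝ) (g : E), ‖g‖ ≤ γ ∧ ‖a - g‖ ≤ 1 - γ ∧ ‖b - g‖ ≤ 1 - γ ∧ ‖a + b - g‖ ≤ γ) ↔
      ‖a + b‖ + ‖a - b‖ ≤ 2 := by
  constructor
  · rintro ⟨γ, g, hg, hag, hbg, habg⟩
    have hsum := norm_le_norm_add_norm_sub' (a + b) g
    have hdiff := norm_sub_le_norm_sub_add_norm_sub a g b
    rw [norm_sub_rev g b] at hdiff
    linarith
  · intro h
    have half : ∀ v : E, ‖(1 / 2 : ℝ) • v‖ = ‖v‖ / 2 := fun v ↦ by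
      rw [norm_smul]
      norm_num
      ring
    refine ⟨‖a + b‖ / 2, (1 / 2 : ℝ) • (a + b), (half _).le, ?_, ?_, ?_⟩
    · rw [show a - (1 / 2 : ℝ) • (a + b) = (1 / 2 : ℝ) • (a - b) by module, half]
      linarith
    · rw [show b - (1 / 2 : ℝ) • (a + b) = (1 / 2 : ℝ) • (b - a) by module, half,
        norm_sub_rev]
      linarith
    · rw [show a + b - (1 / 2 : ℝ) • (a + b) = (1 / 2 : ℝ) • (a + b) by module, half]

theorem busch_criterion_general (a b : EuclideanSpace ℝ (Fin 3)) :
    Coexistent (qubitEffect 1 a) (qubitEffect 1 b) ↔ ‖a + b‖ + ‖a - b‖ ≤ 2 := by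
  rw [coexistent_qubitEffect_iff, ← exists_coexistence_witness_iff]
  norm_num

theorem busch_criterion (a b : EuclideanSpace ℝ (Fin 3)) (ha : ‖a‖ ≤ 1) (hb : ‖b‖ ≤ 1) :
    Coexistent (qubitEffect 1 a) (qubitEffect 1 b) ↔ ‖a + b‖ + ‖a - b‖ ≤ 2 :=
  busch_criterion_general a b
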